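/- arXiv:1207.1965 — 5 statements merged into one kernel-verified Lean document; each statement's English description precedes it below -/
import Mathlib

section
/- Regret bound for the specialist (sleeping-experts) exponentially weighted rule: under convex bounded losses, for all experts j, the regret R_T(S_η, j) = Σ_{t=1}^T (ℓ_t(p_t) - ℓ_t(δ_j)) 𝟙{j ∈ E_t} satisfies R_T(S_η, j) ≤ (ln N)/η + (η/8) L² T. -/
/-!
Track `log w_{t,j}` for the fixed expert `j`. In a round where `j` sleeps it does not move; in a
round where `j` is active it increases by `-η ℓ_t(δ_j) - log Z_t`, where `Z_t` is the mean of
`e^{-η ℓ_t(δ_i)}` under the prediction `p_t`. Hoeffding's lemma gives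
`log Z_t ≤ -η Σ_i p_{t,i} ℓ_t(δ_i) + η² L² / 8`, and by convexity `ℓ_t(p_t) ≤ Σ_i p_{t,i} ℓ_t(δ_i)`.
Hence each round contributes at most `Δ_t log w_j / η + η L² / 8` to the regret; the sum telescopes,
starting from `log w_{1,j} = -log N` and ending at `log w_{T+1,j} ≤ 0`, since the renormalised
update preserves the total weight `1`.
-/

/-- The Dirac mass on expert `j`, viewed as a convex weight vector. -/
noncomputable def dirac {N : ℕ} (j : Fin N) : Fin N → ℝ := fun i => if i = j then 1 else 0

open Real MeasureTheory ProbabilityTheory Finset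

lemma integral_sum_smul_dirac {ι : Type*} [MeasurableSpace ι] [MeasurableSingletonClass ι]
    (s : Finset ι) (q f : ι → ℝ) (hq : ∀ i ∈ s, 0 ≤ q i) :
    ∫ i, f i ∂(∑ i ∈ s, ENNReal.ofReal (q i) • Measure.dirac i) = ∑ i ∈ s, q i * f i := by
  rw [integral_finsetSum_measure fun i _ =>
    (integrable_dirac enorm_lt_top).smul_measure ENNReal.ofReal_ne_top]
  refine sum_congr rfl fun i hi => ?_
  rw [integral_smul_measure, integral_dirac, ENNReal.toReal_ofReal (hq i hi), smul_eq_mul]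

/-- Hoeffding's lemma for a finitely supported distribution `q`. -/
lemma sum_mul_exp_le_of_mem_Icc {ι : Type*} {s : Finset ι} {q x : ι → ℝ} {a b : ℝ}
    (hq : ∀ i ∈ s, 0 ≤ q i) (hq₁ : ∑ i ∈ s, q i = 1) (hx : ∀ i ∈ s, x i ∈ Set.Icc a b) (u : ℝ) :
    ∑ i ∈ s, q i * exp (u * x i) ≤ exp (u * ∑ i ∈ s, q i * x i + (b - a) ^ 2 * u ^ 2 / 8) := by
  let _ : MeasurableSpace ι := ⊤
  set μ : Measure ι := ∑ i ∈ s, ENNReal.ofReal (q i) • Measure.dirac i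
  have hμ (f : ι → ℝ) : ∫ i, f i ∂μ = ∑ i ∈ s, q i * f i := integral_sum_smul_dirac s q f hq
  have : IsProbabilityMeasure μ := by
    constructor
    simp only [μ, Measure.coe_finsetSum, Measure.coe_smul, Finset.sum_apply, Pi.smul_apply,
      measure_univ, smul_eq_mul, mul_one]
    rw [← ENNReal.ofReal_sum_of_nonneg hq, hq₁, ENNReal.ofReal_one]
  have hsupp : ∀ᵐ i ∂μ, x i ∈ Set.Icc a b := by
    rw [ae_iff]
    simp only [μ, Measure.coe_finsetSum, Measure.coe_smul, Finset.sum_apply, Pi.smul_apply,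
      smul_eq_mul]
    refine sum_eq_zero fun i hi => ?_
    rw [Measure.dirac_apply, Set.indicator_of_notMem (by simpa using hx i hi), mul_zero]
  have hmgf := (hasSubgaussianMGF_of_mem_Icc measurable_from_top.aemeasurable hsupp).mgf_le u
  set m := ∑ i ∈ s, q i * x i
  rw [mgf, hμ, hμ x] at hmgf
  have hvar : (((‖b - a‖₊ / 2) ^ 2 : NNReal) : ℝ) = (b - a) ^ 2 / 4 := by
    simp only [div_pow, NNReal.coe_div, NNReal.coe_pow, coe_nnnorm, norm_eq_abs, sq_abs,
      NNReal.coe_ofNat]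
    ring
  calc ∑ i ∈ s, q i * exp (u * x i)
      = exp (u * m) * ∑ i ∈ s, q i * exp (u * (x i - m)) := by
        rw [mul_sum]
        refine sum_congr rfl fun i _ => ?_
        rw [mul_left_comm, ← exp_add]
        ring_nf
    _ ≤ exp (u * m) * exp ((b - a) ^ 2 / 4 * u ^ 2 / 2) := by
        rw [← hvar]
        gcongr
    _ = _ := by
        rw [← exp_add]
        ring_nf

section ExpWeights

variable {ι : Type*} [DecidableEq ι] {s : Finset ι} {η : ℝ} {x v : ι → ℝ}

/-- The weight update of `S_η` on the active set `s` with losses `x_i = ℓ_t(δ_i)`. -/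
noncomputable def expWeightUpdate (s : Finset ι) (η : ℝ) (x v : ι → ℝ) : ι → ℝ := fun i =>
  if i ∈ s then v i * exp (-η * x i) * (∑ j ∈ s, v j) / ∑ k ∈ s, v k * exp (-η * x k) else v i

lemma expWeightUpdate_pos (hv : ∀ i, 0 < v i) (i : ι) : 0 < expWeightUpdate s η x v i := by
  unfold expWeightUpdate
  split_ifs with hi
  · have hS : 0 < ∑ j ∈ s, v j := sum_pos (fun j _ => hv j) ⟨i, hi⟩
    have hZ : 0 < ∑ k ∈ s, v k * exp (-η * x k) :=
      sum_pos (fun k _ => mul_pos (hv k) (exp_pos _)) ⟨i, hi⟩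
    exact div_pos (mul_pos (mul_pos (hv i) (exp_pos _)) hS) hZ
  · exact hv i

lemma sum_expWeightUpdate [Fintype ι] (hs : s.Nonempty) (hv : ∀ i ∈ s, 0 < v i) :
    ∑ i, expWeightUpdate s η x v i = ∑ i, v i := by
  have hZ : 0 < ∑ k ∈ s, v k * exp (-η * x k) :=
    sum_pos (fun k hk => mul_pos (hv k hk) (exp_pos _)) hs
  have hactive : ∑ i ∈ s, expWeightUpdate s η x v i = ∑ i ∈ s, v i := by
    rw [sum_congr rfl fun i hi => show expWeightUpdate s η x v i = _ from if_pos hi, ← sum_div,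
      ← sum_mul, mul_div_cancel_left₀ _ hZ.ne']
  have hsleeping : ∑ i ∈ sᶜ, expWeightUpdate s η x v i = ∑ i ∈ sᶜ, v i :=
    sum_congr rfl fun i hi => if_neg (mem_compl.mp hi)
  rw [← sum_add_sum_compl s, hactive, hsleeping, sum_add_sum_compl]

lemma expWeightUpdate_iterate_pos {E : ℕ → Finset ι} {y w : ℕ → ι → ℝ}
    (hw : ∀ t, w (t + 1) = expWeightUpdate (E t) η (y t) (w t)) {t₀ : ℕ} (h₀ : ∀ i, 0 < w t₀ i) :
    ∀ t, t₀ ≤ t → ∀ i, 0 < w t i :=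
  Nat.le_induction h₀ fun t _ ih => hw t ▸ expWeightUpdate_pos ih

lemma sum_expWeightUpdate_iterate [Fintype ι] {E : ℕ → Finset ι} (hE : ∀ t, (E t).Nonempty)
    {y w : ℕ → ι → ℝ} (hw : ∀ t, w (t + 1) = expWeightUpdate (E t) η (y t) (w t)) {t₀ : ℕ}
    (h₀ : ∀ i, 0 < w t₀ i) : ∀ t, t₀ ≤ t → ∑ i, w t i = ∑ i, w t₀ i := by
  refine Nat.le_induction rfl fun t ht ih => ?_
  rw [hw t, sum_expWeightUpdate (hE t) fun i _ => expWeightUpdate_iterate_pos hw h₀ t ht i, ih]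

lemma log_expWeightUpdate_sub_log_ge {a b : ℝ} (hv : ∀ i ∈ s, 0 < v i)
    (hx : ∀ i ∈ s, x i ∈ Set.Icc a b) {j : ι} (hj : j ∈ s) :
    η * (∑ i ∈ s, v i / (∑ k ∈ s, v k) * x i - x j) - η ^ 2 * (b - a) ^ 2 / 8
      ≤ log (expWeightUpdate s η x v j) - log (v j) := by
  set S := ∑ k ∈ s, v k
  set q : ι → ℝ := fun i => v i / S
  have hS : 0 < S := sum_pos hv ⟨j, hj⟩
  have hq : ∀ i ∈ s, 0 ≤ q i := fun i hi => (div_pos (hv i hi) hS).le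
  have hq₁ : ∑ i ∈ s, q i = 1 := by rw [← sum_div, div_self hS.ne']
  set Z := ∑ i ∈ s, q i * exp (-η * x i)
  have hZ : 0 < Z := sum_pos (fun i hi => mul_pos (div_pos (hv i hi) hS) (exp_pos _)) ⟨j, hj⟩
  have hupdate : expWeightUpdate s η x v j = v j * exp (-η * x j) / Z := by
    have hZS : Z = (∑ k ∈ s, v k * exp (-η * x k)) / S := by
      simp only [Z, q, sum_div, div_mul_eq_mul_div]
    rw [expWeightUpdate, if_pos hj, hZS, div_div_eq_mul_div]
  have hlogZ : log Z ≤ -η * ∑ i ∈ s, q i * x i + (b - a) ^ 2 * (-η) ^ 2 / 8 :=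
    (log_le_iff_le_exp hZ).mpr (sum_mul_exp_le_of_mem_Icc hq hq₁ hx (-η))
  rw [hupdate, log_div (mul_pos (hv j hj) (exp_pos _)).ne' hZ.ne',
    log_mul (hv j hj).ne' (exp_pos _).ne', log_exp]
  linarith

end ExpWeights

section Specialist

variable {N : ℕ}

lemma dirac_mem_stdSimplex (j : Fin N) : dirac j ∈ stdSimplex ℝ (Fin N) := by
  refine ⟨fun i => ?_, ?_⟩
  · unfold dirac
    split_ifs <;> norm_num
  · simp [dirac]

lemma sum_smul_dirac (s : Finset (Fin N)) (c : Fin N → ℝ) :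
    ∑ i ∈ s, c i • dirac i = fun k => if k ∈ s then c k else 0 := by
  funext k
  simp [Finset.sum_apply, dirac]

lemma ConvexOn.map_normalize_le {f : (Fin N → ℝ) → ℝ} (hf : ConvexOn ℝ (stdSimplex ℝ (Fin N)) f)
    {s : Finset (Fin N)} (hs : s.Nonempty) {v : Fin N → ℝ} (hv : ∀ i ∈ s, 0 < v i) :
    f (fun k => (if k ∈ s then v k else 0) / ∑ j ∈ s, v j)
      ≤ ∑ i ∈ s, v i / (∑ j ∈ s, v j) * f (dirac i) := by
  have hS : 0 < ∑ j ∈ s, v j := sum_pos hv hs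
  have hp : (fun k => (if k ∈ s then v k else 0) / ∑ j ∈ s, v j)
      = ∑ i ∈ s, (v i / ∑ j ∈ s, v j) • dirac i := by
    rw [sum_smul_dirac]
    funext k
    split_ifs <;> simp
  rw [hp]
  exact hf.map_sum_le (fun i hi => (div_pos (hv i hi) hS).le)
    (by rw [← sum_div, div_self hS.ne']) (fun i _ => dirac_mem_stdSimplex i)

lemma specialist_round_regret_le {s : Finset (Fin N)} (hs : s.Nonempty) {v : Fin N → ℝ}
    (hv : ∀ i ∈ s, 0 < v i) {f : (Fin N → ℝ) → ℝ} (hf : ConvexOn ℝ (stdSimplex ℝ (Fin N)) f)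
    {L : ℝ} (hx : ∀ i ∈ s, f (dirac i) ∈ Set.Icc 0 L) {η : ℝ} (hη : 0 < η) (j : Fin N) :
    (if j ∈ s then f (fun k => (if k ∈ s then v k else 0) / ∑ i ∈ s, v i) - f (dirac j) else 0)
      ≤ (log (expWeightUpdate s η (fun i => f (dirac i)) v j) - log (v j)) / η + η / 8 * L ^ 2 := by
  split_ifs with hj
  · have hjensen := hf.map_normalize_le hs hv
    have hgain := log_expWeightUpdate_sub_log_ge (η := η) hv hx hj
    have hgain' : (∑ i ∈ s, v i / (∑ k ∈ s, v k) * f (dirac i) - f (dirac j)) - η / 8 * L ^ 2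
        ≤ (log (expWeightUpdate s η (fun i => f (dirac i)) v j) - log (v j)) / η := by
      rw [le_div_iff₀ hη]
      linarith
    linarith
  · rw [expWeightUpdate, if_neg hj, sub_self, zero_div, zero_add]
    positivity

end Specialist

theorem specialist_regret_bound_general
    (N T : ℕ) (hN : 0 < N) (η L : ℝ) (hη : 0 < η)
    (E : ℕ → Finset (Fin N)) (hE : ∀ t, (E t).Nonempty)
    (ℓ : ℕ → (Fin N → ℝ) → ℝ)
    (hconv : ∀ t, ConvexOn ℝ (stdSimplex ℝ (Fin N)) (ℓ t))
    (hbound : ∀ t ∈ Finset.Icc 1 T, ∀ i ∈ E t, ℓ t (dirac i) ∈ Set.Icc (0 : ℝ) L)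
    (w : ℕ → Fin N → ℝ)
    (hw1 : ∀ i, w 1 i = 1 / N)
    (hupd : ∀ t, ∀ i ∈ E t, w (t + 1) i =
      w t i * Real.exp (-η * ℓ t (dirac i)) * (∑ j ∈ E t, w t j) /
        (∑ k ∈ E t, w t k * Real.exp (-η * ℓ t (dirac k))))
    (hupd' : ∀ t, ∀ i, i ∉ E t → w (t + 1) i = w t i)
    (p : ℕ → Fin N → ℝ)
    (hp : ∀ t i, p t i = (if i ∈ E t then w t i else 0) / ∑ j ∈ E t, w t j) :
    ∀ j : Fin N,
      ∑ t ∈ Finset.Icc 1 T, (if j ∈ E t then ℓ t (p t) - ℓ t (dirac j) else 0)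
        ≤ Real.log N / η + η / 8 * L ^ 2 * T := by
  have hw : ∀ t, w (t + 1) = expWeightUpdate (E t) η (fun i => ℓ t (dirac i)) (w t) :=
    fun t => funext fun i => by
      by_cases hi : i ∈ E t
      · rw [hupd t i hi, expWeightUpdate, if_pos hi]
      · rw [hupd' t i hi, expWeightUpdate, if_neg hi]
  have hw1_pos : ∀ i, 0 < w 1 i := fun i => by
    rw [hw1]
    positivity
  have hpos := expWeightUpdate_iterate_pos hw hw1_pos
  intro j
  have hlast : log (w (T + 1) j) ≤ 0 := by
    refine log_nonpos (hpos _ le_add_self j).le ?_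
    calc w (T + 1) j ≤ ∑ i, w (T + 1) i :=
          single_le_sum (fun i _ => (hpos _ le_add_self i).le) (mem_univ j)
      _ = ∑ i, w 1 i := sum_expWeightUpdate_iterate hE hw hw1_pos _ le_add_self
      _ = 1 := by simp [hw1, (Nat.cast_pos.mpr hN).ne']
  calc ∑ t ∈ Icc 1 T, (if j ∈ E t then ℓ t (p t) - ℓ t (dirac j) else 0)
      ≤ ∑ t ∈ Icc 1 T, ((log (w (t + 1) j) - log (w t j)) / η + η / 8 * L ^ 2) := by
        refine sum_le_sum fun t ht => ?_
        rw [funext (hp t), hw t]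
        exact specialist_round_regret_le (hE t) (fun i _ => hpos t (mem_Icc.mp ht).1 i) (hconv t)
          (hbound t ht) hη j
    _ = (log (w (T + 1) j) - log (w 1 j)) / η + η / 8 * L ^ 2 * T := by
        rw [sum_add_distrib, ← sum_div, ← Ico_add_one_right_eq_Icc,
          sum_Ico_sub (fun t => log (w t j)) (Nat.le_add_left 1 T), sum_const, Nat.card_Ico,
          nsmul_eq_mul, Nat.add_sub_cancel]
        ring
    _ ≤ log N / η + η / 8 * L ^ 2 * T := by
        rw [hw1, one_div, log_inv]
        gcongr
        linarith

/-- Regret bound for the specialist (sleeping-experts) aggregation rule `S_η`: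
under convex losses with `ℓ_t(δ_i) ∈ [0, L]` for active experts, for every expert `j`,
`R_T(S_η, j) ≤ (ln N)/η + (η/8) L² T`. -/
theorem specialist_regret_bound
    (N T : ℕ) (hN : 0 < N) (η L : ℝ) (hη : 0 < η) (hL : 0 ≤ L)
    (E : ℕ → Finset (Fin N)) (hE : ∀ t, (E t).Nonempty)
    (ℓ : ℕ → (Fin N → ℝ) → ℝ)
    (hconv : ∀ t, ConvexOn ℝ (stdSimplex ℝ (Fin N)) (ℓ t))
    (hbound : ∀ t ∈ Finset.Icc 1 T, ∀ i ∈ E t, ℓ t (dirac i) ∈ Set.Icc (0 : ℝ) L)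
    (w : ℕ → Fin N → ℝ)
    (hw1 : ∀ i, w 1 i = 1 / N)
    (hupd : ∀ t, ∀ i ∈ E t, w (t + 1) i =
      w t i * Real.exp (-η * ℓ t (dirac i)) * (∑ j ∈ E t, w t j) /
        (∑ k ∈ E t, w t k * Real.exp (-η * ℓ t (dirac k))))
    (hupd' : ∀ t, ∀ i, i ∉ E t → w (t + 1) i = w t i)
    (p : ℕ → Fin N → ℝ)
    (hp : ∀ t i, p t i = (if i ∈ E t then w t i else 0) / ∑ j ∈ E t, w t j) :
    ∀ j : Fin N,
      ∑ t ∈ Finset.Icc 1 T, (if j ∈ E t then ℓ t (p t) - ℓ t (dirac j) else 0)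
        ≤ Real.log N / η + η / 8 * L ^ 2 * T :=
  specialist_regret_bound_general N T hN η L hη E hE ℓ hconv hbound w hw1 hupd hupd' p hp
end

section
/- Regret bound for the gradient version of the specialist rule against convex combinations: if each ℓ_t is convex and (sub)differentiable on the simplex with subgradients bounded in sup-norm by G, then max over probability vectors q of R_T(S_η^grad, q) = Σ_t (ℓ_t(p_t) - ℓ_t(q^{E_t})) q(E_t) is at most (ln N)/η + (η/2) G² T. -/
/-
The potential is the relative entropy `D_t = Σ_i q_i log (q_i / w_t i)` of the comparator `q`
with respect to the weights `w_t`, which keep total mass one. In round `t`, with `W = Σ_E w_t` and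
`Z = Σ_E w_t e^{-η g}` over the active set `E`, the update gives
`D_t - D_{t+1} = q(E) (log W - log Z) - η Σ_E q_i g_i`. As `Z / W` is the moment generating
function at `-η` of `g` under `p_t`, Hoeffding's lemma gives
`log (Z / W) ≤ -η ⟨p_t, g⟩ + η² G² / 2`, while the subgradient inequality at `q^E` bounds `(ℓ(p_t) - ℓ(q^E)) q(E)` by
`q(E) ⟨p_t, g⟩ - Σ_E q_i g_i`. Hence `η` times the round regret is at most
`D_t - D_{t+1} + η² G² / 2`, and telescoping with `D_1 ≤ log N`, `D_{T+1} ≥ 0` gives the bound.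
-/

open Finset Real MeasureTheory ProbabilityTheory

theorem sum_Icc_sub_succ {M : Type*} [AddCommGroup M] (f : ℕ → M) {m n : ℕ} (h : m ≤ n + 1) :
    ∑ i ∈ Icc m n, (f i - f (i + 1)) = f m - f (n + 1) := by
  rw [← neg_sub, ← sum_Ico_sub f h, ← sum_neg_distrib]
  simp only [Finset.Ico_add_one_right_eq_Icc, neg_sub]

theorem integral_sum_smul_dirac_s9 {ι : Type*} [Fintype ι] {p : ι → ℝ} (hp : ∀ i, 0 ≤ p i)
    (x : ι → ℝ) (f : ℝ → ℝ) :
    ∫ y, f y ∂(∑ i, ENNReal.ofReal (p i) • Measure.dirac (x i)) = ∑ i, p i * f (x i) := by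
  rw [integral_finsetSum_measure]
  · simp [integral_smul_measure, ENNReal.toReal_ofReal (hp _)]
  · exact fun i _ ↦ (integrable_dirac (by simp)).smul_measure (by simp)

theorem log_sum_mul_exp_le {ι : Type*} [Fintype ι] {p : ι → ℝ} (hp : p ∈ stdSimplex ℝ ι)
    {x : ι → ℝ} {G : ℝ} (hx : ∀ i, |x i| ≤ G) (t : ℝ) :
    log (∑ i, p i * exp (t * x i)) ≤ t * ∑ i, p i * x i + t ^ 2 * G ^ 2 / 2 := by
  -- `ν` is the law of `x` under `p`; the claim is Hoeffding's lemma for `ν`.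
  set ν : Measure ℝ := ∑ i, ENNReal.ofReal (p i) • Measure.dirac (x i)
  have hν : ∀ f : ℝ → ℝ, ∫ y, f y ∂ν = ∑ i, p i * f (x i) := integral_sum_smul_dirac_s9 hp.1 x
  have : IsProbabilityMeasure ν := by
    constructor
    simp [ν, ← ENNReal.ofReal_sum_of_nonneg (fun i _ ↦ hp.1 i), hp.2]
  have hIcc : ∀ᵐ y ∂ν, id y ∈ Set.Icc (-G) G := by
    rw [ae_iff]
    simpa [ν] using fun i ↦ Or.inr (abs_le.mp (hx i))
  have hsubG := hasSubgaussianMGF_of_mem_Icc aemeasurable_id hIcc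
  have hpos := mgf_pos (t := t) (hsubG.integrable_exp_mul t)
  have hoeffding := hsubG.mgf_le t
  have hc : (((‖G - -G‖₊ / 2) ^ 2 : NNReal) : ℝ) = G ^ 2 := by
    simp only [sub_neg_eq_add, NNReal.coe_pow, NNReal.coe_div, coe_nnnorm, Real.norm_eq_abs,
      NNReal.coe_ofNat, div_pow, sq_abs]
    ring
  simp only [mgf, hν, id, hc] at hoeffding hpos
  set m := ∑ i, p i * x i
  have hmgf : ∑ i, p i * exp (t * (x i - m)) = exp (-(t * m)) * ∑ i, p i * exp (t * x i) := by
    rw [mul_sum]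
    refine sum_congr rfl fun i _ ↦ ?_
    rw [mul_left_comm, ← exp_add]
    ring_nf
  rw [hmgf] at hoeffding hpos
  rw [log_le_iff_le_exp (pos_of_mul_pos_right hpos (exp_pos _).le)]
  calc ∑ i, p i * exp (t * x i) = exp (t * m) * (exp (-(t * m)) * ∑ i, p i * exp (t * x i)) := by
        rw [← mul_assoc, ← exp_add, add_neg_cancel, exp_zero, one_mul]
    _ ≤ exp (t * m) * exp (G ^ 2 * t ^ 2 / 2) := by gcongr
    _ = exp (t * m + t ^ 2 * G ^ 2 / 2) := by rw [← exp_add]; ring_nf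

theorem sub_le_mul_log_div {q w : ℝ} (hq : 0 ≤ q) (hw : 0 < w) : q - w ≤ q * log (q / w) := by
  have := mul_nonneg hw.le (InformationTheory.klFun_nonneg (div_nonneg hq hw.le))
  rw [InformationTheory.klFun] at this
  field_simp at this
  linarith

section

variable {ι : Type*} [Fintype ι]

noncomputable def relEntropy (q w : ι → ℝ) : ℝ := ∑ i, q i * log (q i / w i)

theorem relEntropy_nonneg {q w : ι → ℝ} (hq : ∀ i, 0 ≤ q i) (hw : ∀ i, 0 < w i)
    (hsum : ∑ i, w i ≤ ∑ i, q i) : 0 ≤ relEntropy q w :=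
  calc 0 ≤ ∑ i, (q i - w i) := by rw [sum_sub_distrib]; linarith
    _ ≤ relEntropy q w := sum_le_sum fun i _ ↦ sub_le_mul_log_div (hq i) (hw i)

theorem relEntropy_uniform_le {q : ι → ℝ} (hq : q ∈ stdSimplex ℝ ι) :
    relEntropy q (fun _ ↦ 1 / Fintype.card ι) ≤ log (Fintype.card ι) :=
  calc relEntropy q (fun _ ↦ 1 / Fintype.card ι) ≤ ∑ i, q i * log (Fintype.card ι) := by
        refine sum_le_sum fun i _ ↦ ?_
        rcases (hq.1 i).eq_or_lt with h | h
        · simp [← h]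
        have : Nonempty ι := ⟨i⟩
        have hlog := log_nonpos (hq.1 i) (stdSimplex.le_one ⟨q, hq⟩ i)
        rw [one_div, div_inv_eq_mul, log_mul h.ne' (by positivity), mul_add]
        linarith [mul_nonpos_of_nonneg_of_nonpos (hq.1 i) hlog]
    _ = log (Fintype.card ι) := by rw [← sum_mul, hq.2, one_mul]

theorem relEntropy_sub_relEntropy {q w w' : ι → ℝ} (hw : ∀ i, w i ≠ 0) (hw' : ∀ i, w' i ≠ 0) :
    relEntropy q w - relEntropy q w' = ∑ i, q i * log (w' i / w i) := by
  rw [relEntropy, relEntropy, ← sum_sub_distrib]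
  refine sum_congr rfl fun i _ ↦ ?_
  rcases eq_or_ne (q i) 0 with h | h
  · simp [h]
  · rw [← mul_sub, log_div h (hw i), log_div h (hw' i), log_div (hw' i) (hw i)]
    ring

end

section

variable {ι : Type*} [DecidableEq ι]

/-- Division by zero makes this `0` when `∑ j ∈ s, v j = 0`, which is how the conditioning `q^E`
of the statement reads when `q(E) = 0`. -/
noncomputable def normalizeOn (s : Finset ι) (v : ι → ℝ) (i : ι) : ℝ :=
  (if i ∈ s then v i else 0) / ∑ j ∈ s, v j

theorem sum_normalizeOn_mul [Fintype ι] (s : Finset ι) (v f : ι → ℝ) :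
    ∑ i, normalizeOn s v i * f i = (∑ i ∈ s, v i * f i) / ∑ j ∈ s, v j := by
  simp only [normalizeOn, div_mul_eq_mul_div, ite_mul, zero_mul, ← sum_div, sum_ite_mem,
    univ_inter]

theorem normalizeOn_mem_stdSimplex [Fintype ι] {s : Finset ι} {v : ι → ℝ}
    (hv : ∀ i ∈ s, 0 ≤ v i) (hs : ∑ j ∈ s, v j ≠ 0) : normalizeOn s v ∈ stdSimplex ℝ ι := by
  refine ⟨fun i ↦ div_nonneg ?_ (sum_nonneg hv), ?_⟩
  · split_ifs with hi
    exacts [hv i hi, le_rfl]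
  · simpa [div_self hs] using sum_normalizeOn_mul s v 1

theorem sub_mul_sum_le_of_subgradient [Fintype ι] {f : (ι → ℝ) → ℝ} {p g q : ι → ℝ}
    (s : Finset ι) (hsub : ∀ x ∈ stdSimplex ℝ ι, f p + ∑ i, g i * (x i - p i) ≤ f x)
    (hq : ∀ i, 0 ≤ q i) :
    (f p - f (normalizeOn s q)) * ∑ j ∈ s, q j ≤
      (∑ j ∈ s, q j) * ∑ i, p i * g i - ∑ i ∈ s, q i * g i := by
  rcases (sum_nonneg fun j (_ : j ∈ s) ↦ hq j).eq_or_lt with hs | hs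
  · have hq0 : ∀ i ∈ s, q i = 0 := (sum_eq_zero_iff_of_nonneg fun j _ ↦ hq j).mp hs.symm
    have hqg : ∑ i ∈ s, q i * g i = 0 := sum_eq_zero fun i hi ↦ by rw [hq0 i hi, zero_mul]
    simp [← hs, hqg]
  have key := hsub _ (normalizeOn_mem_stdSimplex (fun i _ ↦ hq i) hs.ne')
  simp only [mul_comm (g _), sub_mul, sum_sub_distrib, sum_normalizeOn_mul] at key
  calc (f p - f (normalizeOn s q)) * ∑ j ∈ s, q j
      ≤ (∑ i, p i * g i - (∑ i ∈ s, q i * g i) / ∑ j ∈ s, q j) * ∑ j ∈ s, q j :=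
        mul_le_mul_of_nonneg_right (by linarith) hs.le
    _ = _ := by field_simp

variable {η : ℝ} {s : Finset ι} {g w : ι → ℝ}

noncomputable def specialistUpdate (η : ℝ) (s : Finset ι) (g w : ι → ℝ) (i : ι) : ℝ :=
  if i ∈ s then w i * exp (-η * g i) * (∑ j ∈ s, w j) / ∑ k ∈ s, w k * exp (-η * g k) else w i

theorem specialistUpdate_of_mem {i : ι} (hi : i ∈ s) : specialistUpdate η s g w i =
    w i * exp (-η * g i) * (∑ j ∈ s, w j) / ∑ k ∈ s, w k * exp (-η * g k) :=
  if_pos hi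

theorem specialistUpdate_of_notMem {i : ι} (hi : i ∉ s) : specialistUpdate η s g w i = w i :=
  if_neg hi

theorem specialistUpdate_pos (hw : ∀ i, 0 < w i) (i : ι) : 0 < specialistUpdate η s g w i := by
  by_cases hi : i ∈ s
  · have := sum_pos (fun j _ ↦ hw j) ⟨i, hi⟩
    have := sum_pos (fun j _ ↦ mul_pos (hw j) (exp_pos (-η * g j))) ⟨i, hi⟩
    have := hw i
    rw [specialistUpdate_of_mem hi]
    positivity
  · rw [specialistUpdate_of_notMem hi]
    exact hw i

theorem sum_specialistUpdate [Fintype ι] (hw : ∀ i, 0 < w i) (hs : s.Nonempty) :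
    ∑ i, specialistUpdate η s g w i = ∑ i, w i := by
  have hZ := sum_pos (fun j _ ↦ mul_pos (hw j) (exp_pos (-η * g j))) hs
  rw [← sum_add_sum_compl s, ← sum_add_sum_compl s w]
  congr 1
  · rw [sum_congr rfl fun i hi ↦ specialistUpdate_of_mem hi, ← sum_div, ← sum_mul,
      mul_div_cancel_left₀ _ hZ.ne']
  · exact sum_congr rfl fun i hi ↦ specialistUpdate_of_notMem (mem_compl.mp hi)

theorem log_specialistUpdate_div (hw : ∀ i, 0 < w i) {i : ι} (hi : i ∈ s) :
    log (specialistUpdate η s g w i / w i) =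
      log (∑ j ∈ s, w j) - log (∑ k ∈ s, w k * exp (-η * g k)) - η * g i := by
  have hW := sum_pos (fun j _ ↦ hw j) ⟨i, hi⟩
  have hZ := sum_pos (fun j _ ↦ mul_pos (hw j) (exp_pos (-η * g j))) ⟨i, hi⟩
  have hwi := (hw i).ne'
  rw [specialistUpdate_of_mem hi, show w i * exp (-η * g i) * (∑ j ∈ s, w j) /
      (∑ k ∈ s, w k * exp (-η * g k)) / w i =
      exp (-η * g i) * ((∑ j ∈ s, w j) / ∑ k ∈ s, w k * exp (-η * g k)) by field_simp,
    log_mul (exp_pos _).ne' (div_pos hW hZ).ne', log_exp, log_div hW.ne' hZ.ne']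
  ring

theorem relEntropy_sub_relEntropy_specialistUpdate [Fintype ι] (q : ι → ℝ)
    (hw : ∀ i, 0 < w i) :
    relEntropy q w - relEntropy q (specialistUpdate η s g w) =
      (∑ i ∈ s, q i) * (log (∑ j ∈ s, w j) - log (∑ k ∈ s, w k * exp (-η * g k))) -
        η * ∑ i ∈ s, q i * g i := by
  have hinactive : ∑ i ∈ sᶜ, q i * log (specialistUpdate η s g w i / w i) = 0 :=
    sum_eq_zero fun i hi ↦ by
      rw [specialistUpdate_of_notMem (mem_compl.mp hi), div_self (hw i).ne', log_one, mul_zero]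
  rw [relEntropy_sub_relEntropy (fun i ↦ (hw i).ne') (fun i ↦ (specialistUpdate_pos hw i).ne'),
    ← sum_add_sum_compl s, hinactive, add_zero,
    sum_congr rfl fun i hi ↦ by rw [log_specialistUpdate_div hw hi]]
  rw [sum_mul, mul_sum, ← sum_sub_distrib]
  exact sum_congr rfl fun i _ ↦ by ring

end

theorem specialistUpdate_regret_le {ι : Type*} [Fintype ι] [DecidableEq ι] {η G : ℝ}
    {s : Finset ι} {g w q : ι → ℝ} {f : (ι → ℝ) → ℝ} (hη : 0 ≤ η)
    (hsub : ∀ x ∈ stdSimplex ℝ ι,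
      f (normalizeOn s w) + ∑ i, g i * (x i - normalizeOn s w i) ≤ f x)
    (hg : ∀ i, |g i| ≤ G) (hq : q ∈ stdSimplex ℝ ι) (hw : ∀ i, 0 < w i) (hs : s.Nonempty) :
    η * ((f (normalizeOn s w) - f (normalizeOn s q)) * ∑ j ∈ s, q j) ≤
      relEntropy q w - relEntropy q (specialistUpdate η s g w) + η ^ 2 * G ^ 2 / 2 := by
  have hW := sum_pos (fun j _ ↦ hw j) hs
  have hZ := sum_pos (fun j _ ↦ mul_pos (hw j) (exp_pos (-η * g j))) hs
  have hoeffding := log_sum_mul_exp_le (normalizeOn_mem_stdSimplex (fun i _ ↦ (hw i).le) hW.ne')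
    hg (-η)
  rw [sum_normalizeOn_mul s w (fun i ↦ exp (-η * g i)), log_div hZ.ne' hW.ne'] at hoeffding
  have hQ0 : 0 ≤ ∑ j ∈ s, q j := sum_nonneg fun j _ ↦ hq.1 j
  have hQ1 : ∑ j ∈ s, q j ≤ 1 := hq.2 ▸ sum_le_univ_sum_of_nonneg hq.1
  have hregret := mul_le_mul_of_nonneg_left (sub_mul_sum_le_of_subgradient s hsub hq.1) hη
  rw [relEntropy_sub_relEntropy_specialistUpdate q hw]
  linarith [mul_le_mul_of_nonneg_left hoeffding hQ0,
    mul_le_mul_of_nonneg_right hQ1 (sq_nonneg (η * G))]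

theorem specialist_gradient_regret_bound_general
    (N T : ℕ) (hN : 0 < N) (η G : ℝ) (hη : 0 < η)
    (E : ℕ → Finset (Fin N)) (hE : ∀ t, (E t).Nonempty)
    (ℓ : ℕ → (Fin N → ℝ) → ℝ)
    (p : ℕ → Fin N → ℝ)
    -- `g t` is a subgradient of `ℓ t` at the played point `p t`
    (g : ℕ → Fin N → ℝ)
    (hsub : ∀ t, ∀ x ∈ stdSimplex ℝ (Fin N),
      ℓ t (p t) + ∑ i : Fin N, g t i * (x i - p t i) ≤ ℓ t x)
    (hGbound : ∀ t i, |g t i| ≤ G)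
    -- the specialist rule run on the pseudo-losses `x ↦ Σ_i g t i * x i`
    (w : ℕ → Fin N → ℝ)
    (hw1 : ∀ i, w 1 i = 1 / N)
    (hupd : ∀ t, ∀ i ∈ E t, w (t + 1) i =
      w t i * Real.exp (-η * g t i) * (∑ j ∈ E t, w t j) /
        (∑ k ∈ E t, w t k * Real.exp (-η * g t k)))
    (hupd' : ∀ t, ∀ i, i ∉ E t → w (t + 1) i = w t i)
    (hp : ∀ t i, p t i = (if i ∈ E t then w t i else 0) / ∑ j ∈ E t, w t j) :
    ∀ q ∈ stdSimplex ℝ (Fin N),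
      ∑ t ∈ Finset.Icc 1 T,
        (ℓ t (p t) -
          ℓ t (fun i => if (∑ j ∈ E t, q j) = 0 then 0
                else (if i ∈ E t then q i else 0) / ∑ j ∈ E t, q j)) *
          (∑ j ∈ E t, q j)
        ≤ Real.log N / η + η / 2 * G ^ 2 * T := by
  intro q hq
  have hp_eq (t : ℕ) : p t = normalizeOn (E t) (w t) := funext (hp t)
  have hqE (t : ℕ) : (fun i ↦ if ∑ j ∈ E t, q j = 0 then 0
      else (if i ∈ E t then q i else 0) / ∑ j ∈ E t, q j) = normalizeOn (E t) q :=
    funext fun i ↦ ite_eq_right_iff.mpr fun h ↦ by simp [h]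
  have hw_succ (t : ℕ) : w (t + 1) = specialistUpdate η (E t) (g t) (w t) := by
    ext i
    by_cases hi : i ∈ E t
    · rw [hupd t i hi, specialistUpdate_of_mem hi]
    · rw [hupd' t i hi, specialistUpdate_of_notMem hi]
  have hw_one : w 1 = fun _ ↦ 1 / (Fintype.card (Fin N) : ℝ) := by ext i; simp [hw1]
  have hw (t : ℕ) (ht : 1 ≤ t) : (∀ i, 0 < w t i) ∧ ∑ i, w t i = 1 := by
    induction t, ht using Nat.le_induction with
    | base => simp [hw_one, hN, hN.ne']
    | succ t _ ih =>
      rw [hw_succ]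
      exact ⟨specialistUpdate_pos ih.1, (sum_specialistUpdate ih.1 (hE t)).trans ih.2⟩
  have hround : ∀ t ∈ Icc 1 T,
      η * ((ℓ t (p t) - ℓ t (normalizeOn (E t) q)) * ∑ j ∈ E t, q j) ≤
        relEntropy q (w t) - relEntropy q (w (t + 1)) + η ^ 2 * G ^ 2 / 2 := fun t ht ↦ by
    rw [hw_succ, hp_eq]
    exact specialistUpdate_regret_le hη.le (hp_eq t ▸ hsub t) (hGbound t) hq
      (hw t (mem_Icc.mp ht).1).1 (hE t)
  have hsum := sum_le_sum hround
  rw [← mul_sum, sum_add_distrib, sum_Icc_sub_succ _ le_add_self, sum_const, Nat.card_Icc,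
    add_tsub_cancel_right, nsmul_eq_mul] at hsum
  have hinit : relEntropy q (w 1) ≤ log N := by simpa [hw_one] using relEntropy_uniform_le hq
  have hfinal : 0 ≤ relEntropy q (w (T + 1)) :=
    relEntropy_nonneg hq.1 (hw _ le_add_self).1 (by rw [(hw _ le_add_self).2, hq.2])
  simp only [hqE]
  rw [div_add' _ _ _ hη.ne', le_div_iff₀ hη]
  linarith

/-- Regret bound for the gradient version `S_η^grad` of the specialist rule against convex
combinations of experts: if the losses are convex with subgradients bounded in sup-norm by `G`,
then for every probability vector `q`,
`Σ_t (ℓ_t(p_t) - ℓ_t(q^{E_t})) q(E_t) ≤ (ln N)/η + (η/2) G² T`. -/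
theorem specialist_gradient_regret_bound
    (N T : ℕ) (hN : 0 < N) (η G : ℝ) (hη : 0 < η) (hG : 0 ≤ G)
    (E : ℕ → Finset (Fin N)) (hE : ∀ t, (E t).Nonempty)
    (ℓ : ℕ → (Fin N → ℝ) → ℝ)
    (hconv : ∀ t, ConvexOn ℝ (stdSimplex ℝ (Fin N)) (ℓ t))
    (p : ℕ → Fin N → ℝ)
    -- `g t` is a subgradient of `ℓ t` at the played point `p t`
    (g : ℕ → Fin N → ℝ)
    (hsub : ∀ t, ∀ x ∈ stdSimplex ℝ (Fin N),
      ℓ t (p t) + ∑ i : Fin N, g t i * (x i - p t i) ≤ ℓ t x)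
    (hGbound : ∀ t i, |g t i| ≤ G)
    -- the specialist rule run on the pseudo-losses `x ↦ Σ_i g t i * x i`
    (w : ℕ → Fin N → ℝ)
    (hw1 : ∀ i, w 1 i = 1 / N)
    (hupd : ∀ t, ∀ i ∈ E t, w (t + 1) i =
      w t i * Real.exp (-η * g t i) * (∑ j ∈ E t, w t j) /
        (∑ k ∈ E t, w t k * Real.exp (-η * g t k)))
    (hupd' : ∀ t, ∀ i, i ∉ E t → w (t + 1) i = w t i)
    (hp : ∀ t i, p t i = (if i ∈ E t then w t i else 0) / ∑ j ∈ E t, w t j) :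
    ∀ q ∈ stdSimplex ℝ (Fin N),
      ∑ t ∈ Finset.Icc 1 T,
        (ℓ t (p t) -
          ℓ t (fun i => if (∑ j ∈ E t, q j) = 0 then 0
                else (if i ∈ E t then q i else 0) / ∑ j ∈ E t, q j)) *
          (∑ j ∈ E t, q j)
        ≤ Real.log N / η + η / 2 * G ^ 2 * T :=
  specialist_gradient_regret_bound_general N T hN η G hη E hE ℓ p g hsub hGbound w hw1 hupd hupd' hp
end

section
/- Lower bound on the fixed-share prior: for any legal compound expert j_1^T with at most m switches, ν(j_1^T) ≥ (1/N)(1-α)^{T-m-1}(α/N)^m, where ν is the Markov prior built from the uniform initial distribution on E_1 and the transition functions Tr_t. -/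
/-- The transition functions of the fixed-share analysis. -/
noncomputable def Tr (N : ℕ) (E : ℕ → Finset (Fin N)) (α : ℝ) (t : ℕ) (i j : Fin N) : ℝ :=
  if j ∈ E (t + 1) then
    (if i ∈ E (t + 1) then
      (if i = j then (1 - α) + α / (E (t + 1)).card else α / (E (t + 1)).card)
     else 1 / (E (t + 1)).card)
  else 0

/-- The Markov prior `ν` over compound experts with uniform initial distribution on `E 0`. -/
noncomputable def nuDist (N T : ℕ) (E : ℕ → Finset (Fin N)) (α : ℝ)
    (σ : Fin (T + 1) → Fin N) : ℝ :=
  (if σ 0 ∈ E 0 then (1 : ℝ) / (E 0).card else 0) *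
    ∏ t : Fin T, Tr N E α t.val (σ t.castSucc) (σ t.succ)

/-- Lower bound on the fixed-share prior: a legal compound expert with `m` switches receives
prior mass at least `(1/N) (1-α)^{T-m} (α/N)^m` (here the horizon has `T+1` rounds). -/
theorem nu_lower_bound (N T m : ℕ) (hN : 0 < N)
    (E : ℕ → Finset (Fin N)) (hE : ∀ t, (E t).Nonempty)
    (α : ℝ) (hα : 0 ≤ α) (hα1 : α ≤ 1)
    (σ : Fin (T + 1) → Fin N)
    (hleg : ∀ t : Fin (T + 1), σ t ∈ E t.val)
    (hm : (Finset.univ.filter fun t : Fin T => σ t.castSucc ≠ σ t.succ).card = m) :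
    (1 / (N : ℝ)) * (1 - α) ^ (T - m) * (α / N) ^ m ≤ nuDist N T E α σ := by
  have hNR : (0 : ℝ) < N := by exact_mod_cast hN
  have hcard : ∀ t, 0 < ((E t).card : ℝ) ∧ ((E t).card : ℝ) ≤ N := by
    intro t
    constructor
    · exact_mod_cast Finset.card_pos.2 (hE t)
    · exact_mod_cast le_trans (Finset.card_le_univ _) (by simp)
  have hbnd_nonneg : ∀ t : Fin T,
      (0 : ℝ) ≤ (if σ t.castSucc ≠ σ t.succ then α / N else (1 - α)) := by
    intro t
    split
    · exact div_nonneg hα hNR.le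
    · linarith
  have hbound : ∀ t : Fin T,
      (if σ t.castSucc ≠ σ t.succ then α / N else (1 - α)) ≤
        Tr N E α t.val (σ t.castSucc) (σ t.succ) := by
    intro t
    have hj : σ t.succ ∈ E (t.val + 1) := by simpa using hleg t.succ
    have hc := hcard (t.val + 1)
    unfold Tr
    rw [if_pos hj]
    by_cases hi : σ t.castSucc ∈ E (t.val + 1)
    · rw [if_pos hi]
      by_cases heq : σ t.castSucc = σ t.succ
      · rw [if_pos heq, if_neg (by simp [heq])]
        have : 0 ≤ α / ((E (t.val + 1)).card : ℝ) := div_nonneg hα hc.1.le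
        linarith
      · rw [if_neg heq, if_pos heq]
        exact div_le_div_of_nonneg_left hα hc.1 hc.2
    · rw [if_neg hi]
      have hne : σ t.castSucc ≠ σ t.succ := fun h => hi (h ▸ hj)
      rw [if_pos hne]
      calc α / (N : ℝ) ≤ 1 / (N : ℝ) := by gcongr
        _ ≤ 1 / ((E (t.val + 1)).card : ℝ) := by
          apply div_le_div_of_nonneg_left one_pos.le hc.1 hc.2
  have hprod : (1 - α) ^ (T - m) * (α / N) ^ m ≤
      ∏ t : Fin T, Tr N E α t.val (σ t.castSucc) (σ t.succ) := by
    have h1 : (∏ t : Fin T, (if σ t.castSucc ≠ σ t.succ then α / N else (1 - α))) ≤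
        ∏ t : Fin T, Tr N E α t.val (σ t.castSucc) (σ t.succ) :=
      Finset.prod_le_prod (fun t _ => hbnd_nonneg t) (fun t _ => hbound t)
    refine le_trans (le_of_eq ?_) h1
    rw [Finset.prod_ite]
    have hmc : (Finset.univ.filter fun t : Fin T => ¬ σ t.castSucc ≠ σ t.succ).card = T - m := by
      have := Finset.card_filter_add_card_filter_not (s := (Finset.univ : Finset (Fin T)))
        (p := fun t : Fin T => σ t.castSucc ≠ σ t.succ)
      simp only [Finset.card_univ, Fintype.card_fin] at this
      omega
    rw [Finset.prod_const, Finset.prod_const, hm, hmc, mul_comm]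
  have hσ0 : σ 0 ∈ E 0 := by simpa using hleg 0
  unfold nuDist
  rw [if_pos hσ0]
  have hc0 := hcard 0
  have h0 : (1 : ℝ) / N ≤ 1 / ((E 0).card : ℝ) :=
    div_le_div_of_nonneg_left one_pos.le hc0.1 hc0.2
  have hbnn : (0 : ℝ) ≤ (1 - α) ^ (T - m) * (α / N) ^ m := by
    apply mul_nonneg (pow_nonneg (by linarith) _) (pow_nonneg (div_nonneg hα hNR.le) _)
  calc (1 / (N : ℝ)) * (1 - α) ^ (T - m) * (α / N) ^ m
      = (1 / (N : ℝ)) * ((1 - α) ^ (T - m) * (α / N) ^ m) := by ring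
    _ ≤ (1 / ((E 0).card : ℝ)) * ∏ t : Fin T, Tr N E α t.val (σ t.castSucc) (σ t.succ) :=
        mul_le_mul h0 hprod hbnn (by positivity)
end

section
/- Approximation bound for the operational (48-step delayed) exponentially weighted rule: if the instantaneous regrets are bounded in [-B², B²], then the ratio of the weights of the delayed rule W_η (using regrets up to time 48⌊(t-1)/48⌋) to those of the standard rule E_η (using regrets up to t-1) lies in [e^{-94ηB²}, e^{94ηB²}], and consequently R_T(W_η, j) - R_T(E_η, j) ≤ 2B² max{e^{94ηB²} - 1, 1 - e^{-94ηB²}} · T for every expert j. -/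
/-- Approximation bound for the operational (48-step delayed) exponentially weighted rule: if
the instantaneous regrets lie in `[-B², B²]`, the ratio between the weights of the delayed rule
`W_η` and those of the standard rule `E_η` lies in `[e^{-94ηB²}, e^{94ηB²}]`; consequently
`R_T(W_η, j) - R_T(E_η, j) ≤ 2B² max{e^{94ηB²} - 1, 1 - e^{-94ηB²}} T` for every expert `j`. -/
theorem delayed_ewa_approximation
    (N T : ℕ) (hN : 0 < N) (η B : ℝ) (hη : 0 < η) (hB : 0 < B)
    (E : ℕ → Finset (Fin N)) (hE : ∀ t, (E t).Nonempty)
    (p0 : Fin N → ℝ) (hp0 : ∀ j, 0 < p0 j)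
    -- instantaneous regrets, bounded in `[-B², B²]`, and their cumulative sums
    (r : ℕ → Fin N → ℝ) (hr : ∀ t j, |r t j| ≤ B ^ 2)
    (R : ℕ → Fin N → ℝ) (hR : ∀ s j, R s j = ∑ t ∈ Finset.range s, r t j)
    -- the standard and the delayed exponentially weighted average rules
    (pE pW : ℕ → Fin N → ℝ)
    (hpE : ∀ t, 1 ≤ t → ∀ j, pE t j =
      (if j ∈ E t then p0 j * Real.exp (η * R (t - 1) j) else 0) /
        ∑ k ∈ E t, p0 k * Real.exp (η * R (t - 1) k))
    (hpW : ∀ t, 1 ≤ t → ∀ j, pW t j =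
      (if j ∈ E t then p0 j * Real.exp (η * R (48 * ((t - 1) / 48)) j) else 0) /
        ∑ k ∈ E t, p0 k * Real.exp (η * R (48 * ((t - 1) / 48)) k))
    -- losses of weight vectors, with gradients bounded by `2B²`
    (ℓ : ℕ → (Fin N → ℝ) → ℝ)
    (hlip : ∀ t x y, |ℓ t x - ℓ t y| ≤ 2 * B ^ 2 * ∑ j : Fin N, |x j - y j|) :
    (∀ t, 1 ≤ t → ∀ j ∈ E t,
      pW t j / pE t j ∈
        Set.Icc (Real.exp (-(94 * η * B ^ 2))) (Real.exp (94 * η * B ^ 2))) ∧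
    ∀ j : Fin N,
      (∑ t ∈ Finset.Icc 1 T, (if j ∈ E t then ℓ t (pW t) - ℓ t (dirac j) else 0))
        - (∑ t ∈ Finset.Icc 1 T, (if j ∈ E t then ℓ t (pE t) - ℓ t (dirac j) else 0))
        ≤ 2 * B ^ 2 *
            max (Real.exp (94 * η * B ^ 2) - 1) (1 - Real.exp (-(94 * η * B ^ 2))) * T := by

  have hB2 : (0:ℝ) < B ^ 2 := by positivity
  set A := 47 * η * B ^ 2 with hA
  have hApos : 0 < A := by positivity
  -- gap between cumulative regrets
  have hgap : ∀ s (j : Fin N), |η * R s j - η * R (48 * (s / 48)) j| ≤ A := by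
    intro s j
    have hm : 48 * (s / 48) ≤ s := Nat.mul_div_le s 48
    have h1 : R s j - R (48 * (s / 48)) j = ∑ u ∈ Finset.Ico (48 * (s / 48)) s, r u j := by
      rw [hR, hR, Finset.sum_Ico_eq_sub _ hm]
    have h2 : |R s j - R (48 * (s / 48)) j| ≤ 47 * B ^ 2 := by
      rw [h1]
      calc |∑ u ∈ Finset.Ico (48 * (s / 48)) s, r u j|
          ≤ ∑ u ∈ Finset.Ico (48 * (s / 48)) s, |r u j| := Finset.abs_sum_le_sum_abs _ _
        _ ≤ ∑ u ∈ Finset.Ico (48 * (s / 48)) s, B ^ 2 := Finset.sum_le_sum fun u _ => hr u j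
        _ = ((s - 48 * (s / 48) : ℕ) : ℝ) * B ^ 2 := by
            rw [Finset.sum_const, Nat.card_Ico, nsmul_eq_mul]
        _ ≤ 47 * B ^ 2 := by
            have h3 : (s - 48 * (s / 48) : ℕ) ≤ 47 := by omega
            have h4 : ((s - 48 * (s / 48) : ℕ) : ℝ) ≤ 47 := by exact_mod_cast h3
            nlinarith
    rw [← mul_sub, abs_mul, abs_of_pos hη]
    calc η * |R s j - R (48 * (s / 48)) j| ≤ η * (47 * B ^ 2) :=
          mul_le_mul_of_nonneg_left h2 hη.le
      _ = A := by rw [hA]; ring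
  -- the key ratio bound
  have key : ∀ t, 1 ≤ t → ∀ j ∈ E t,
      pW t j / pE t j ∈
        Set.Icc (Real.exp (-(94 * η * B ^ 2))) (Real.exp (94 * η * B ^ 2)) := by
    intro t ht j hj
    set Zs := ∑ k ∈ E t, p0 k * Real.exp (η * R (t - 1) k) with hZsdef
    set Zm := ∑ k ∈ E t, p0 k * Real.exp (η * R (48 * ((t - 1) / 48)) k) with hZmdef
    have hZspos : 0 < Zs := Finset.sum_pos (fun k _ => mul_pos (hp0 k) (Real.exp_pos _)) (hE t)
    have hZmpos : 0 < Zm := Finset.sum_pos (fun k _ => mul_pos (hp0 k) (Real.exp_pos _)) (hE t)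
    have hub : Zs ≤ Real.exp A * Zm := by
      rw [hZsdef, hZmdef, Finset.mul_sum]
      refine Finset.sum_le_sum fun k _ => ?_
      have h2 : η * R (t - 1) k ≤ A + η * R (48 * ((t - 1) / 48)) k := by
        have := (abs_le.mp (hgap (t - 1) k)).2; linarith
      calc p0 k * Real.exp (η * R (t - 1) k)
          ≤ p0 k * Real.exp (A + η * R (48 * ((t - 1) / 48)) k) :=
            mul_le_mul_of_nonneg_left (Real.exp_le_exp.mpr h2) (hp0 k).le
        _ = Real.exp A * (p0 k * Real.exp (η * R (48 * ((t - 1) / 48)) k)) := by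
            rw [Real.exp_add]; ring
    have hlb : Real.exp (-A) * Zm ≤ Zs := by
      rw [hZsdef, hZmdef, Finset.mul_sum]
      refine Finset.sum_le_sum fun k _ => ?_
      have h2 : -A + η * R (48 * ((t - 1) / 48)) k ≤ η * R (t - 1) k := by
        have := (abs_le.mp (hgap (t - 1) k)).1; linarith
      calc Real.exp (-A) * (p0 k * Real.exp (η * R (48 * ((t - 1) / 48)) k))
          = p0 k * Real.exp (-A + η * R (48 * ((t - 1) / 48)) k) := by
            rw [Real.exp_add]; ring
        _ ≤ p0 k * Real.exp (η * R (t - 1) k) :=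
            mul_le_mul_of_nonneg_left (Real.exp_le_exp.mpr h2) (hp0 k).le
    rw [hpW t ht j, hpE t ht j, if_pos hj, if_pos hj]
    have heq : (p0 j * Real.exp (η * R (48 * ((t - 1) / 48)) j) / Zm) /
        (p0 j * Real.exp (η * R (t - 1) j) / Zs)
        = Real.exp (η * R (48 * ((t - 1) / 48)) j - η * R (t - 1) j) * (Zs / Zm) := by
      rw [div_div_div_comm, mul_div_mul_left _ _ (hp0 j).ne', ← Real.exp_sub,
        div_div_eq_mul_div, mul_div_assoc]
    rw [heq]
    have hd1 : Real.exp (-A) ≤ Real.exp (η * R (48 * ((t - 1) / 48)) j - η * R (t - 1) j) :=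
      Real.exp_le_exp.mpr (by have := (abs_le.mp (hgap (t - 1) j)).2; linarith)
    have hd2 : Real.exp (η * R (48 * ((t - 1) / 48)) j - η * R (t - 1) j) ≤ Real.exp A :=
      Real.exp_le_exp.mpr (by have := (abs_le.mp (hgap (t - 1) j)).1; linarith)
    have hz1 : Real.exp (-A) ≤ Zs / Zm := (le_div_iff₀ hZmpos).mpr hlb
    have hz2 : Zs / Zm ≤ Real.exp A := (div_le_iff₀ hZmpos).mpr hub
    refine Set.mem_Icc.mpr ⟨?_, ?_⟩
    · have h3 : Real.exp (-(94 * η * B ^ 2)) = Real.exp (-A) * Real.exp (-A) := by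
        rw [← Real.exp_add]; congr 1; rw [hA]; ring
      rw [h3]
      exact mul_le_mul hd1 hz1 (Real.exp_pos _).le (Real.exp_pos _).le
    · have h3 : Real.exp (94 * η * B ^ 2) = Real.exp A * Real.exp A := by
        rw [← Real.exp_add]; congr 1; rw [hA]; ring
      rw [h3]
      exact mul_le_mul hd2 hz2 (div_nonneg hZspos.le hZmpos.le) (Real.exp_pos _).le
  refine ⟨key, ?_⟩
  set M := max (Real.exp (94 * η * B ^ 2) - 1) (1 - Real.exp (-(94 * η * B ^ 2))) with hM
  have hMnn : 0 ≤ M := le_max_of_le_left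
    (by have := Real.one_le_exp (show (0:ℝ) ≤ 94 * η * B ^ 2 by positivity); linarith)
  have hpEpos : ∀ t, 1 ≤ t → ∀ j ∈ E t, 0 < pE t j := by
    intro t ht j hj
    rw [hpE t ht j, if_pos hj]
    exact div_pos (mul_pos (hp0 j) (Real.exp_pos _)) (Finset.sum_pos (fun k _ => mul_pos (hp0 k) (Real.exp_pos _)) (hE t))
  have hsumabs : ∀ t, 1 ≤ t → (∑ i : Fin N, |pW t i - pE t i|) ≤ M := by
    intro t ht
    have hzero : ∀ i ∈ Finset.univ, i ∉ E t → |pW t i - pE t i| = 0 := by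
      intro i _ hi
      rw [hpW t ht i, hpE t ht i, if_neg hi, if_neg hi]
      simp
    rw [← Finset.sum_subset (Finset.subset_univ (E t)) hzero]
    have hsum1 : ∑ i ∈ E t, pE t i = 1 := by
      have hc : ∀ i ∈ E t, pE t i = (p0 i * Real.exp (η * R (t - 1) i)) /
          ∑ k ∈ E t, p0 k * Real.exp (η * R (t - 1) k) := fun i hi => by
        rw [hpE t ht i, if_pos hi]
      rw [Finset.sum_congr rfl hc, ← Finset.sum_div,
        div_self (Finset.sum_pos (fun k _ => mul_pos (hp0 k) (Real.exp_pos _)) (hE t)).ne']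
    calc ∑ i ∈ E t, |pW t i - pE t i| ≤ ∑ i ∈ E t, M * pE t i := by
          refine Finset.sum_le_sum fun i hi => ?_
          have hpe := hpEpos t ht i hi
          obtain ⟨hl, hu⟩ := Set.mem_Icc.mp (key t ht i hi)
          have hdec : pW t i - pE t i = (pW t i / pE t i - 1) * pE t i := by
            field_simp
          rw [hdec, abs_mul, abs_of_pos hpe]
          refine mul_le_mul_of_nonneg_right ?_ hpe.le
          rw [abs_le]
          constructor
          · have := le_max_right (Real.exp (94 * η * B ^ 2) - 1)
              (1 - Real.exp (-(94 * η * B ^ 2)))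
            rw [← hM] at this; linarith
          · have := le_max_left (Real.exp (94 * η * B ^ 2) - 1)
              (1 - Real.exp (-(94 * η * B ^ 2)))
            rw [← hM] at this; linarith
      _ = M := by rw [← Finset.mul_sum, hsum1, mul_one]
  intro j
  rw [← Finset.sum_sub_distrib]
  calc (∑ t ∈ Finset.Icc 1 T, ((if j ∈ E t then ℓ t (pW t) - ℓ t (dirac j) else 0)
          - (if j ∈ E t then ℓ t (pE t) - ℓ t (dirac j) else 0)))
      ≤ ∑ t ∈ Finset.Icc 1 T, 2 * B ^ 2 * M := by
        refine Finset.sum_le_sum fun t ht => ?_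
        have ht1 : 1 ≤ t := (Finset.mem_Icc.mp ht).1
        by_cases hj : j ∈ E t
        · rw [if_pos hj, if_pos hj]
          have h1 : ℓ t (pW t) - ℓ t (pE t) ≤ 2 * B ^ 2 * M := by
            calc ℓ t (pW t) - ℓ t (pE t) ≤ |ℓ t (pW t) - ℓ t (pE t)| := le_abs_self _
              _ ≤ 2 * B ^ 2 * ∑ i : Fin N, |pW t i - pE t i| := hlip t _ _
              _ ≤ 2 * B ^ 2 * M :=
                  mul_le_mul_of_nonneg_left (hsumabs t ht1) (by positivity)
          linarith
        · rw [if_neg hj, if_neg hj]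
          have : (0:ℝ) ≤ 2 * B ^ 2 * M := mul_nonneg (by positivity) hMnn
          linarith
    _ = 2 * B ^ 2 * M * T := by
        rw [Finset.sum_const, Nat.card_Icc, nsmul_eq_mul]
        norm_num
        ring
end

section
/- Vanishing per-round regret for fixed-share with optimal tuning: for every m ≤ T-1 there exist η* > 0 and α* ∈ (0,1) such that the fixed-share bound yields max over legal compound experts with at most m switches of the regret at most L √((T/2)((m+1) ln N + (T-1) H(m/(T-1)))), where H(x) = -x ln x - (1-x) ln(1-x) is the binary entropy; in particular this bound is o(T) whenever m = o(T). -/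
/-- The binary entropy `H(x) = -(x ln x + (1-x) ln(1-x))` (with `0 ln 0 = 0`, which is
Mathlib's convention for `Real.log 0 = 0`). -/
noncomputable def binEntropy (x : ℝ) : ℝ := -(x * Real.log x + (1 - x) * Real.log (1 - x))

/-- Vanishing per-round regret for fixed-share with optimal tuning: for every `m ≤ T - 1`
there exist `η* > 0` and `α* ∈ [0, 1]` such that the fixed-share regret bound
`((m+1)/η) ln N + (1/η) ln(1/(α^m (1-α)^{T-m-1})) + (η/8) L² T` is at most
`L √((T/2) ((m+1) ln N + (T-1) H(m/(T-1))))`. -/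
theorem fixed_share_optimal_tuning (N T : ℕ) (L : ℝ) (hN : 2 ≤ N) (hT : 1 ≤ T) (hL : 0 < L) :
    ∀ m : ℕ, m ≤ T - 1 →
      ∃ η : ℝ, 0 < η ∧ ∃ α ∈ Set.Icc (0 : ℝ) 1,
        ((m : ℝ) + 1) / η * Real.log N
            + (1 / η) * Real.log (1 / (α ^ m * (1 - α) ^ (T - m - 1)))
            + η / 8 * L ^ 2 * T
          ≤ L * Real.sqrt (((T : ℝ) / 2) *
              (((m : ℝ) + 1) * Real.log N
                + ((T : ℝ) - 1) * binEntropy ((m : ℝ) / ((T : ℝ) - 1)))) := by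
  intro m hm
  have hN2 : (2 : ℝ) ≤ (N : ℝ) := by exact_mod_cast hN
  have hlogN : 0 < Real.log N := Real.log_pos (by linarith)
  have hT0 : (0 : ℝ) < (T : ℝ) := by exact_mod_cast hT
  set x : ℝ := (m : ℝ) / ((T : ℝ) - 1) with hxdef
  -- x ∈ [0,1]
  have hx01 : x ∈ Set.Icc (0 : ℝ) 1 := by
    rcases eq_or_lt_of_le hT with h1 | h2
    · have : (T : ℝ) = 1 := by exact_mod_cast h1.symm
      simp [hxdef, this]
    · have h2' : (2 : ℕ) ≤ T := h2
      have hT1 : (0 : ℝ) < (T : ℝ) - 1 := by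
        have : (2 : ℝ) ≤ (T : ℝ) := by exact_mod_cast h2'
        linarith
      have hmle : (m : ℝ) ≤ (T : ℝ) - 1 := by
        have h' : (m : ℝ) ≤ ((T - 1 : ℕ) : ℝ) := by exact_mod_cast hm
        rw [Nat.cast_sub hT] at h'; push_cast at h'; linarith
      constructor
      · positivity
      · rw [hxdef, div_le_one hT1]; exact hmle
  -- key identity for the log term
  have hlog : Real.log (1 / (x ^ m * (1 - x) ^ (T - m - 1)))
      = ((T : ℝ) - 1) * binEntropy x := by
    rcases eq_or_lt_of_le hT with h1 | h2
    · have hm0 : m = 0 := by omega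
      have hTT : T = 1 := h1.symm
      subst hm0
      have : (T : ℝ) = 1 := by exact_mod_cast hTT
      simp [hTT, this]
    · have h2' : (2 : ℕ) ≤ T := h2
      have hT1 : (0 : ℝ) < (T : ℝ) - 1 := by
        have : (2 : ℝ) ≤ (T : ℝ) := by exact_mod_cast h2'
        linarith
      have hmx : ((T : ℝ) - 1) * x = (m : ℝ) := by
        rw [hxdef]; field_simp
      have hmle : (m : ℝ) ≤ (T : ℝ) - 1 := by
        have h' : (m : ℝ) ≤ ((T - 1 : ℕ) : ℝ) := by exact_mod_cast hm
        rw [Nat.cast_sub hT] at h'; push_cast at h'; linarith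
      have hk : ((T - m - 1 : ℕ) : ℝ) = ((T : ℝ) - 1) * (1 - x) := by
        have he : (T - m - 1 : ℕ) = T - 1 - m := by omega
        have hm' : m ≤ T - 1 := hm
        rw [he, Nat.cast_sub hm', Nat.cast_sub hT]
        push_cast
        nlinarith [hmx]
      have hxpow : x ^ m ≠ 0 := by
        rcases Nat.eq_zero_or_pos m with h | h
        · simp [h]
        · have : (0 : ℝ) < x := by
            rw [hxdef]
            apply div_pos _ hT1
            exact_mod_cast h
          positivity
      have h1xpow : (1 - x) ^ (T - m - 1) ≠ 0 := by
        rcases Nat.eq_zero_or_pos (T - m - 1) with h | h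
        · simp [h]
        · have : x < 1 := by
            rw [hxdef, div_lt_one hT1]
            have h0 : m < T - 1 := by omega
            have h' : (m : ℝ) < ((T - 1 : ℕ) : ℝ) := by exact_mod_cast h0
            rw [Nat.cast_sub hT] at h'; push_cast at h'; linarith
          have : (0 : ℝ) < 1 - x := by linarith
          positivity
      rw [one_div, Real.log_inv, Real.log_mul hxpow h1xpow, Real.log_pow, Real.log_pow]
      rw [binEntropy]
      rw [hk, ← hmx]
      ring
  -- the quantity under the square root
  set B : ℝ := ((m : ℝ) + 1) * Real.log N + ((T : ℝ) - 1) * binEntropy x with hBdef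
  have hentx : 0 ≤ binEntropy x := by
    obtain ⟨hx0, hx1⟩ := hx01
    have h1 : x * Real.log x ≤ 0 :=
      mul_nonpos_of_nonneg_of_nonpos hx0 (Real.log_nonpos hx0 hx1)
    have h2 : (1 - x) * Real.log (1 - x) ≤ 0 :=
      mul_nonpos_of_nonneg_of_nonpos (by linarith) (Real.log_nonpos (by linarith) (by linarith))
    rw [binEntropy]; linarith
  have hTm1 : (0 : ℝ) ≤ (T : ℝ) - 1 := by
    have : (1 : ℝ) ≤ (T : ℝ) := by exact_mod_cast hT
    linarith
  have hB : 0 < B := by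
    have h1 : 0 ≤ ((T : ℝ) - 1) * binEntropy x := mul_nonneg hTm1 hentx
    have h2 : Real.log N ≤ ((m : ℝ) + 1) * Real.log N := by
      nlinarith [Nat.cast_nonneg (α := ℝ) m]
    rw [hBdef]; linarith
  set C : ℝ := L ^ 2 * (T : ℝ) / 8 with hCdef
  have hC : 0 < C := by rw [hCdef]; positivity
  set s : ℝ := Real.sqrt B with hsdef
  set t : ℝ := Real.sqrt C with htdef
  have hs : 0 < s := Real.sqrt_pos.2 hB
  have ht : 0 < t := Real.sqrt_pos.2 hC
  have hs2 : s ^ 2 = B := Real.sq_sqrt hB.le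
  have ht2 : t ^ 2 = C := Real.sq_sqrt hC.le
  clear_value s t
  refine ⟨s / t, by positivity, x, hx01, ?_⟩
  rw [hlog]
  have hW : (0 : ℝ) ≤ (T : ℝ) / 2 * B := by positivity
  have hRHS2 : (L * Real.sqrt ((T : ℝ) / 2 * B)) ^ 2 = 4 * B * C := by
    rw [mul_pow, Real.sq_sqrt hW, hCdef]; ring
  have hRHSnn : 0 ≤ L * Real.sqrt ((T : ℝ) / 2 * B) := by positivity
  have hLHS : ((m : ℝ) + 1) / (s / t) * Real.log N
      + 1 / (s / t) * (((T : ℝ) - 1) * binEntropy x)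
      + s / t / 8 * L ^ 2 * (T : ℝ) = 2 * s * t := by
    have hst : s / t / 8 * L ^ 2 * (T : ℝ) = (s / t) * C := by
      rw [hCdef]; ring
    have h1 : ((m : ℝ) + 1) / (s / t) * Real.log N
        + 1 / (s / t) * (((T : ℝ) - 1) * binEntropy x) = B / (s / t) := by
      rw [hBdef]; field_simp
    have hBst : B = s * s := by rw [← hs2]; ring
    have hCt : C = t * t := by rw [← ht2]; ring
    rw [hst, h1, hBst, hCt]
    field_simp
    ring
  rw [hLHS]
  have hsq : (2 * s * t) ^ 2 = (L * Real.sqrt ((T : ℝ) / 2 * B)) ^ 2 := by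
    rw [hRHS2, ← hs2, ← ht2]; ring
  calc 2 * s * t = Real.sqrt ((2 * s * t) ^ 2) := (Real.sqrt_sq (by positivity)).symm
    _ = Real.sqrt ((L * Real.sqrt ((T : ℝ) / 2 * B)) ^ 2) := by rw [hsq]
    _ = L * Real.sqrt ((T : ℝ) / 2 * B) := Real.sqrt_sq hRHSnn
    _ ≤ L * Real.sqrt ((T : ℝ) / 2 * B) := le_refl _
end
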